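/- arXiv:2102.09789 — 6 statements merged into one kernel-verified Lean document; each statement's English description precedes it below -/
import Mathlib

section
/- Generalized Yoneda lemma: let A be a V-category and X a complete V-category. For all a ∈ A, x ∈ X, and V-functors μ: A^op → X, one has X^{A^op}(ι(a,x), μ) = X(x, μa), where ι(a,x)(b) = A(b,a) ⋆ x. -/
/-- The residual (internal hom) of a commutative quantale:
`resid x z = ⋁ {y | x * y ≤ z}`. -/
def resid {V : Type*} [CompleteLattice V] [CommMonoid V] (x z : V) : V :=
  sSup {y | x * y ≤ z}

/-- A commutative quantale: a commutative monoid on a complete lattice in which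
multiplication distributes over arbitrary suprema. -/
def IsCommQuantale (V : Type*) [CompleteLattice V] [CommMonoid V] : Prop :=
  ∀ (x : V) (S : Set V), x * sSup S = ⨆ y ∈ S, x * y

/-- A `V`-category structure on a type `X`: a hom map valued in `V` with
`k ≤ X(x,x)` (here `k = 1`) and `X(x,y) ⊗ X(y,z) ≤ X(x,z)`. -/
structure VCat (V : Type*) [CompleteLattice V] [CommMonoid V] (X : Type*) where
  hom : X → X → V
  refl : ∀ x, 1 ≤ hom x x
  comp : ∀ x y z, hom x y * hom y z ≤ hom x z

variable {V : Type*} [CompleteLattice V] [CommMonoid V]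

/-- The dual `V`-category. -/
def VCat.op {X : Type*} (A : VCat V X) : VCat V X where
  hom x y := A.hom y x
  refl := A.refl
  comp x y z := by rw [mul_comm]; exact A.comp z y x

/-- `V`-functors between `V`-categories. -/
def IsVFunctor {X Y : Type*} (A : VCat V X) (B : VCat V Y) (f : X → Y) : Prop :=
  ∀ x x', A.hom x x' ≤ B.hom (f x) (f x')

/-- `V`-bifunctors `X ⊗ Y → Z` (on the tensor product of `V`-categories). -/
def IsVBifunctor {X Y Z : Type*} (A : VCat V X) (B : VCat V Y) (C : VCat V Z)
    (φ : X → Y → Z) : Prop :=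
  ∀ x x' y y', A.hom x x' * B.hom y y' ≤ C.hom (φ x y) (φ x' y')

/-- A two-variable adjunction `(X, Y, Z, ⊠, ↙, ↘)` in `V`-categories. -/
def TwoVarAdj {X Y Z : Type*} (A : VCat V X) (B : VCat V Y) (C : VCat V Z)
    (w : X → Y → Z) (l : Z → Y → X) (r : X → Z → Y) : Prop :=
  IsVBifunctor A B C w ∧ IsVBifunctor C B.op A l ∧ IsVBifunctor A.op C B r ∧
    ∀ x y z, C.hom (w x y) z = A.hom x (l z y) ∧ A.hom x (l z y) = B.hom y (r x z)


lemma quant_mul_le_mul_left {V : Type*} [CompleteLattice V] [CommMonoid V]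
    (hq : IsCommQuantale V) {b c : V} (a : V) (h : b ≤ c) : a * b ≤ a * c := by
  have h1 : a * sSup {b, c} = ⨆ y ∈ ({b, c} : Set V), a * y := hq a {b, c}
  have h2 : sSup ({b, c} : Set V) = c := by
    rw [sSup_pair, sup_eq_right.mpr h]
  rw [h2] at h1
  rw [h1]
  exact le_biSup (fun y => a * y) (Set.mem_insert b {c})

lemma quant_mul_le_mul_right {V : Type*} [CompleteLattice V] [CommMonoid V]
    (hq : IsCommQuantale V) {b c : V} (a : V) (h : b ≤ c) : b * a ≤ c * a := by
  rw [mul_comm b, mul_comm c]; exact quant_mul_le_mul_left hq a h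

/-- generalized Yoneda: `X^{A^op}(ι(a,x), μ) = X(x, μ a)`. -/
theorem stmt10 {A X : Type*} (hq : IsCommQuantale V)
    (Ac : VCat V A) (Xc : VCat V X)
    (star : V → X → X)
    (hstar : ∀ v x y, Xc.hom (star v x) y = resid v (Xc.hom x y))
    (a : A) (x : X) (μ : A → X) (hμ : IsVFunctor Ac.op Xc μ) :
    (⨅ b, Xc.hom (star (Ac.hom b a) x) (μ b)) = Xc.hom x (μ a) := by
  apply le_antisymm
  · refine le_trans (iInf_le _ a) ?_
    rw [hstar]
    apply sSup_le
    intro y hy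
    calc y = 1 * y := (one_mul y).symm
    _ ≤ Ac.hom a a * y := quant_mul_le_mul_right hq y (Ac.refl a)
    _ ≤ _ := hy
  · refine le_iInf fun b => ?_
    rw [hstar]
    apply le_sSup
    show Ac.hom b a * Xc.hom x (μ a) ≤ Xc.hom x (μ b)
    calc Ac.hom b a * Xc.hom x (μ a)
        ≤ Xc.hom (μ a) (μ b) * Xc.hom x (μ a) := by
          exact quant_mul_le_mul_right hq _ (hμ a b)
      _ = Xc.hom x (μ a) * Xc.hom (μ a) (μ b) := mul_comm _ _
      _ ≤ Xc.hom x (μ b) := Xc.comp _ _ _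
end

section
/- The V-bifunctor ι: A ⊗ X → X^{A^op} is dense: for all μ, μ' ∈ X^{A^op}, X^{A^op}(μ, μ') = ⋀_{a ∈ A} ⋀_{x ∈ X} (X^{A^op}(ι(a,x), μ) → X^{A^op}(ι(a,x), μ')). -/
variable {V : Type*} [CompleteLattice V] [CommMonoid V]

lemma q_mul_le_mul_right (hq : IsCommQuantale V) {a b : V} (c : V) (h : a ≤ b) :
    c * a ≤ c * b := by
  have hd := hq c {a, b}
  have hs : sSup {a, b} = b := by simp [sup_eq_right.mpr h]
  rw [hs] at hd
  rw [hd]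
  exact le_biSup _ (by simp : a ∈ ({a, b} : Set V))

lemma q_mul_le_mul (hq : IsCommQuantale V) {a b c d : V} (h1 : a ≤ b) (h2 : c ≤ d) :
    a * c ≤ b * d := by
  refine le_trans (q_mul_le_mul_right hq a h2) ?_
  rw [mul_comm a d, mul_comm b d]
  exact q_mul_le_mul_right hq d h1

lemma q_resid_mul (hq : IsCommQuantale V) (x z : V) : x * resid x z ≤ z := by
  rw [resid, hq]
  exact iSup₂_le fun y hy => hy

lemma q_le_resid (hq : IsCommQuantale V) {x y z : V} : y ≤ resid x z ↔ x * y ≤ z := by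
  constructor
  · intro h
    exact le_trans (q_mul_le_mul_right hq x h) (q_resid_mul hq x z)
  · intro h; exact le_sSup h

lemma q_resid_le (hq : IsCommQuantale V) {v z : V} (h : 1 ≤ v) : resid v z ≤ z := by
  calc resid v z = 1 * resid v z := (one_mul _).symm
    _ ≤ v * resid v z := q_mul_le_mul hq h le_rfl
    _ ≤ z := q_resid_mul hq v z

/-- `ι : A ⊗ X → X^{A^op}` is dense:
`X^{A^op}(μ, μ') = ⨅ a, ⨅ x, X^{A^op}(ι(a,x), μ) → X^{A^op}(ι(a,x), μ')`. -/
theorem stmt12 {A X : Type*} (hq : IsCommQuantale V)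
    (Ac : VCat V A) (Xc : VCat V X)
    (star : V → X → X)
    (hstar : ∀ v x y, Xc.hom (star v x) y = resid v (Xc.hom x y))
    (μ μ' : A → X) (hμ : IsVFunctor Ac.op Xc μ) (hμ' : IsVFunctor Ac.op Xc μ') :
    (⨅ b, Xc.hom (μ b) (μ' b)) =
      ⨅ a, ⨅ x, resid (⨅ b, Xc.hom (star (Ac.hom b a) x) (μ b))
        (⨅ b, Xc.hom (star (Ac.hom b a) x) (μ' b)) := by
  apply le_antisymm
  · refine le_iInf fun a => le_iInf fun x => (q_le_resid hq).mpr ?_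
    refine le_iInf fun b => ?_
    calc (⨅ b', Xc.hom (star (Ac.hom b' a) x) (μ b')) * ⨅ b', Xc.hom (μ b') (μ' b')
        ≤ Xc.hom (star (Ac.hom b a) x) (μ b) * Xc.hom (μ b) (μ' b) :=
          q_mul_le_mul hq (iInf_le _ b) (iInf_le _ b)
      _ ≤ _ := Xc.comp _ _ _
  · refine le_iInf fun b => ?_
    refine le_trans (le_trans (iInf_le _ b) (iInf_le _ (μ b))) ?_
    have hP : (1 : V) ≤ ⨅ b', Xc.hom (star (Ac.hom b' b) (μ b)) (μ b') := by
      refine le_iInf fun b' => ?_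
      rw [hstar, q_le_resid hq, mul_one]
      exact hμ b b'
    have h2 : resid (⨅ b', Xc.hom (star (Ac.hom b' b) (μ b)) (μ b'))
        (⨅ b', Xc.hom (star (Ac.hom b' b) (μ b)) (μ' b')) ≤
        ⨅ b', Xc.hom (star (Ac.hom b' b) (μ b)) (μ' b') := q_resid_le hq hP
    refine le_trans h2 ?_
    refine le_trans (iInf_le _ b) ?_
    rw [hstar]
    exact le_trans (q_resid_le hq (Ac.refl b)) le_rfl
end

section
/- A V-functor f: X → Y is dense if and only if Y(y, y') = ⋀_{x ∈ X} (Y(fx, y) → Y(fx, y')) for all y, y' ∈ Y. -/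
variable {V : Type*} [CompleteLattice V] [CommMonoid V]

lemma qmul_mono (hq : IsCommQuantale V) {a y y' : V} (h : y ≤ y') : a * y ≤ a * y' := by
  have : a * sSup {y, y'} = ⨆ z ∈ ({y, y'} : Set V), a * z := hq a _
  have hs : sSup ({y, y'} : Set V) = y' := by
    rw [sSup_pair, sup_eq_right.mpr h]
  rw [hs] at this
  rw [this]
  exact le_iSup₂ (f := fun z (_ : z ∈ ({y, y'} : Set V)) => a * z) y (by simp)

lemma resid_adj (hq : IsCommQuantale V) {a b y : V} : a * y ≤ b ↔ y ≤ resid a b := by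
  constructor
  · intro h; exact le_sSup h
  · intro h
    calc a * y ≤ a * resid a b := qmul_mono hq h
    _ ≤ b := by
        rw [resid, hq a]
        exact iSup₂_le fun c hc => hc

lemma resid_anti (hq : IsCommQuantale V) {a a' b : V} (h : a ≤ a') :
    resid a' b ≤ resid a b := by
  rw [← resid_adj hq]
  calc a * resid a' b = resid a' b * a := mul_comm _ _
  _ ≤ resid a' b * a' := qmul_mono hq h
  _ = a' * resid a' b := mul_comm _ _
  _ ≤ b := (resid_adj hq).mpr le_rfl

/-- a `V`-functor `f : X → Y` is dense (every `y` is a weighted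
colimit of `f` by some presheaf `μ` on `X`) iff
`Y(y,y') = ⨅ x, Y(fx, y) → Y(fx, y')` for all `y, y'`. -/
theorem stmt13 {X Y : Type*} (hq : IsCommQuantale V)
    (A : VCat V X) (B : VCat V Y) (f : X → Y) (hf : IsVFunctor A B f) :
    (∀ y : Y, ∃ μ : X → V,
        (∀ x x', A.hom x' x ≤ resid (μ x) (μ x')) ∧
          ∀ y', B.hom y y' = ⨅ x, resid (μ x) (B.hom (f x) y')) ↔
      (∀ y y', B.hom y y' =
        ⨅ x, resid (B.hom (f x) y) (B.hom (f x) y')) := by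
  constructor
  · intro h y y'
    obtain ⟨μ, hpre, hcol⟩ := h y
    have hμle : ∀ x, μ x ≤ B.hom (f x) y := by
      intro x
      have h1 : (1 : V) ≤ resid (μ x) (B.hom (f x) y) := by
        calc (1 : V) ≤ B.hom y y := B.refl y
        _ = ⨅ x, resid (μ x) (B.hom (f x) y) := hcol y
        _ ≤ _ := iInf_le _ x
      calc μ x = μ x * 1 := (mul_one _).symm
      _ ≤ B.hom (f x) y := (resid_adj hq).mpr h1
    apply le_antisymm
    · apply le_iInf
      intro x
      rw [← resid_adj hq]
      exact B.comp (f x) y y'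
    · calc (⨅ x, resid (B.hom (f x) y) (B.hom (f x) y'))
          ≤ ⨅ x, resid (μ x) (B.hom (f x) y') :=
            iInf_mono fun x => resid_anti hq (hμle x)
      _ = B.hom y y' := (hcol y').symm
  · intro h y
    refine ⟨fun x => B.hom (f x) y, ?_, h y⟩
    intro x x'
    rw [← resid_adj hq]
    calc B.hom (f x) y * A.hom x' x
        ≤ B.hom (f x) y * B.hom (f x') (f x) := qmul_mono hq (hf x' x)
    _ = B.hom (f x') (f x) * B.hom (f x) y := mul_comm _ _
    _ ≤ B.hom (f x') y := B.comp _ _ _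
end

section
/- Isbell adjunction from a two-variable adjunction: let (X, Y, Z, ⊠, ↙, ↘) be a two-variable adjunction of V-categories with X, Y, Z admitting the needed infima (e.g., complete), and φ: A^op ⊗ B → Z a V-bifunctor. Define (φ↑ μ)(b) = ⋀_{a} φ(a,b) ↙ μa for μ ∈ Y^{A^op} and (φ↓ λ)(a) = ⋀_{b} λb ↘ φ(a,b) for λ ∈ X^B. Then (X^B)^op(φ↑ μ, λ) = Y^{A^op}(μ, φ↓ λ) for all μ and λ; in particular φ↑ ⊣ φ↓. -/
variable {V : Type*} [CompleteLattice V] [CommMonoid V]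

/-- Isbell adjunction from a two-variable adjunction:
`(X^B)^op(φ↑ μ, λ) = Y^{A^op}(μ, φ↓ λ)`, where
`(φ↑ μ) b = ⨅ a, φ(a,b) ↙ μ a` and `(φ↓ λ) a = ⨅ b, λ b ↘ φ(a,b)`;
infima in `X` and `Y` are conical, characterized by
`X(x, ⨅ᵢ gᵢ) = ⨅ᵢ X(x, gᵢ)`. -/
theorem stmt14 {X Y Z A B : Type*} (hq : IsCommQuantale V)
    (Xc : VCat V X) (Yc : VCat V Y) (Zc : VCat V Z)
    (w : X → Y → Z) (l : Z → Y → X) (r : X → Z → Y)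
    (adj : TwoVarAdj Xc Yc Zc w l r)
    (Ac : VCat V A) (Bc : VCat V B)
    (φ : A → B → Z) (hφ : IsVBifunctor Ac.op Bc Zc φ)
    (Xinf : (A → X) → X)
    (hXinf : ∀ (g : A → X) (x : X), Xc.hom x (Xinf g) = ⨅ a, Xc.hom x (g a))
    (Yinf : (B → Y) → Y)
    (hYinf : ∀ (g : B → Y) (y : Y), Yc.hom y (Yinf g) = ⨅ b, Yc.hom y (g b))
    (μ : A → Y) (hμ : IsVFunctor Ac.op Yc μ)
    (lam : B → X) (hlam : IsVFunctor Bc Xc lam) :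
    (⨅ b, Xc.hom (lam b) (Xinf fun a => l (φ a b) (μ a))) =
      ⨅ a, Yc.hom (μ a) (Yinf fun b => r (lam b) (φ a b)) := by
  simp only [hXinf, hYinf]
  rw [iInf_comm]
  exact iInf_congr fun a => iInf_congr fun b => (adj.2.2.2 (lam b) (μ a) (φ a b)).2
end

section
/- In the Isbell adjunction induced by a V-bifunctor φ: A^op ⊗ B → Z over a two-variable adjunction (X,Y,Z,⊠,↙,↘) with X,Y,Z complete, for all a ∈ A, b ∈ B, y ∈ Y: (φ↑ ι(a,y))(b) ≅ φ(a,b) ↙ y, where ι(a,y): A^op → Y is given by ι(a,y)(a') = A(a',a) ⋆ y. -/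
variable {V : Type*} [CompleteLattice V] [CommMonoid V]

lemma quantale_mul_mono {V : Type*} [CompleteLattice V] [CommMonoid V]
    (hq : IsCommQuantale V) {a b : V} (x : V) (h : a ≤ b) : x * a ≤ x * b := by
  have hs : sSup ({a, b} : Set V) = b := by
    rw [sSup_insert, sSup_singleton, sup_eq_right.mpr h]
  have hd := hq x ({a, b} : Set V)
  rw [hs] at hd
  rw [hd]
  exact le_biSup (fun y => x * y) (Set.mem_insert a _)

lemma quantale_mul_mono' {V : Type*} [CompleteLattice V] [CommMonoid V]
    (hq : IsCommQuantale V) {a b c d : V} (h1 : a ≤ b) (h2 : c ≤ d) : a * c ≤ b * d :=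
  le_trans (quantale_mul_mono hq a h2) (by
    rw [mul_comm a d, mul_comm b d]; exact quantale_mul_mono hq d h1)

lemma le_resid' {V : Type*} [CompleteLattice V] [CommMonoid V]
    {x z s : V} (h : x * s ≤ z) : s ≤ resid x z := le_sSup h

lemma mul_resid_le' {V : Type*} [CompleteLattice V] [CommMonoid V]
    (hq : IsCommQuantale V) (x z : V) : x * resid x z ≤ z := by
  rw [resid, hq]
  exact iSup₂_le fun y hy => hy

/-- `(φ↑ ι(a,y)) b ≅ φ(a,b) ↙ y`, where
`ι(a,y) a' = A(a',a) ⋆ y` (tensor in `Y`) and `(φ↑ μ) b = ⨅ a, φ(a,b) ↙ μ a`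
(conical infimum in `X`). -/
theorem stmt15 {X Y Z A B : Type*} (hq : IsCommQuantale V)
    (Xc : VCat V X) (Yc : VCat V Y) (Zc : VCat V Z)
    (w : X → Y → Z) (l : Z → Y → X) (r : X → Z → Y)
    (adj : TwoVarAdj Xc Yc Zc w l r)
    (Ac : VCat V A) (Bc : VCat V B)
    (φ : A → B → Z) (hφ : IsVBifunctor Ac.op Bc Zc φ)
    (starY : V → Y → Y)
    (hstarY : ∀ v y y', Yc.hom (starY v y) y' = resid v (Yc.hom y y'))
    (Xinf : (A → X) → X)
    (hXinf : ∀ (g : A → X) (x : X), Xc.hom x (Xinf g) = ⨅ a, Xc.hom x (g a))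
    (a : A) (b : B) (y : Y) :
    1 ≤ Xc.hom (Xinf fun a' => l (φ a' b) (starY (Ac.hom a' a) y)) (l (φ a b) y) ∧
      1 ≤ Xc.hom (l (φ a b) y)
        (Xinf fun a' => l (φ a' b) (starY (Ac.hom a' a) y)) := by
  obtain ⟨hw, hl, hr, hadj⟩ := adj
  set g : A → X := fun a' => l (φ a' b) (starY (Ac.hom a' a) y) with hg
  constructor
  · -- first direction
    have hga : (1 : V) ≤ Xc.hom (Xinf g) (g a) := by
      have h0 := hXinf g (Xinf g)
      have h1 : (1 : V) ≤ ⨅ a', Xc.hom (Xinf g) (g a') := h0 ▸ Xc.refl _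
      exact le_trans h1 (iInf_le _ a)
    have hunit : Ac.hom a a ≤ Yc.hom y (starY (Ac.hom a a) y) := by
      have h0 := hstarY (Ac.hom a a) y (starY (Ac.hom a a) y)
      have h1 : (1 : V) ≤ resid (Ac.hom a a) (Yc.hom y (starY (Ac.hom a a) y)) :=
        h0 ▸ Yc.refl _
      calc Ac.hom a a = Ac.hom a a * 1 := (mul_one _).symm
        _ ≤ Ac.hom a a * resid (Ac.hom a a) (Yc.hom y (starY (Ac.hom a a) y)) :=
            quantale_mul_mono hq _ h1
        _ ≤ _ := mul_resid_le' hq _ _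
    have h2 : (1 : V) ≤ Xc.hom (g a) (l (φ a b) y) := by
      have hb := hl (φ a b) (φ a b) (starY (Ac.hom a a) y) y
      have : (1 : V) * 1 ≤ Zc.hom (φ a b) (φ a b) * Yc.op.hom (starY (Ac.hom a a) y) y :=
        quantale_mul_mono' hq (Zc.refl _) (le_trans (Ac.refl a) hunit)
      rw [one_mul] at this
      exact le_trans this hb
    calc (1 : V) = 1 * 1 := (one_mul 1).symm
      _ ≤ Xc.hom (Xinf g) (g a) * Xc.hom (g a) (l (φ a b) y) :=
          quantale_mul_mono' hq hga h2
      _ ≤ _ := Xc.comp _ _ _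
  · -- second direction
    rw [hXinf]
    refine le_iInf fun a' => ?_
    have h1 : Ac.hom a' a ≤ Xc.hom (l (φ a b) y) (l (φ a' b) y) := by
      have hz : Ac.hom a' a * Bc.hom b b ≤ Zc.hom (φ a b) (φ a' b) := hφ a a' b b
      have hb := hl (φ a b) (φ a' b) y y
      calc Ac.hom a' a = Ac.hom a' a * 1 * 1 := by rw [mul_one, mul_one]
        _ ≤ (Ac.hom a' a * Bc.hom b b) * Yc.hom y y :=
            quantale_mul_mono' hq (quantale_mul_mono hq _ (Bc.refl b)) (Yc.refl y)
        _ ≤ Zc.hom (φ a b) (φ a' b) * Yc.hom y y := quantale_mul_mono' hq hz le_rfl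
        _ ≤ _ := hb
    have heq : Xc.hom (l (φ a b) y) (g a')
        = resid (Ac.hom a' a) (Yc.hom y (r (l (φ a b) y) (φ a' b))) := by
      rw [(hadj (l (φ a b) y) (starY (Ac.hom a' a) y) (φ a' b)).2, hstarY]
    rw [heq, ← (hadj (l (φ a b) y) y (φ a' b)).2]
    refine le_resid' ?_
    rw [mul_one]
    exact h1
end

section
/- Kan adjunction: let (X, Y, Z, ⊠, ↙, ↘) be a two-variable adjunction of complete V-categories and ψ: A^op ⊗ B → Y a V-bifunctor. Define (ψ* λ)(a) = ⋁_{b} λb ⊠ ψ(a,b) for λ ∈ X^{B^op} and (ψ_* μ)(b) = ⋀_{a} μa ↙ ψ(a,b) for μ ∈ Z^{A^op}. Then Z^{A^op}(ψ* λ, μ) = X^{B^op}(λ, ψ_* μ), i.e., ψ* ⊣ ψ_*: Z^{A^op} → X^{B^op}. -/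
variable {V : Type*} [CompleteLattice V] [CommMonoid V]

/-- Kan adjunction: `Z^{A^op}(ψ* λ, μ) = X^{B^op}(λ, ψ_* μ)`,
where `(ψ* λ) a = ⨆ b, λ b ⊠ ψ(a,b)` (conical supremum in `Z`) and
`(ψ_* μ) b = ⨅ a, μ a ↙ ψ(a,b)` (conical infimum in `X`). -/
theorem stmt18 {X Y Z A B : Type*} (hq : IsCommQuantale V)
    (Xc : VCat V X) (Yc : VCat V Y) (Zc : VCat V Z)
    (w : X → Y → Z) (l : Z → Y → X) (r : X → Z → Y)
    (adj : TwoVarAdj Xc Yc Zc w l r)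
    (Ac : VCat V A) (Bc : VCat V B)
    (ψ : A → B → Y) (hψ : IsVBifunctor Ac.op Bc Yc ψ)
    (Zsup : (B → Z) → Z)
    (hZsup : ∀ (g : B → Z) (z : Z), Zc.hom (Zsup g) z = ⨅ b, Zc.hom (g b) z)
    (Xinf : (A → X) → X)
    (hXinf : ∀ (g : A → X) (x : X), Xc.hom x (Xinf g) = ⨅ a, Xc.hom x (g a))
    (lam : B → X) (hlam : IsVFunctor Bc.op Xc lam)
    (μ : A → Z) (hμ : IsVFunctor Ac.op Zc μ) :
    (⨅ a, Zc.hom (Zsup fun b => w (lam b) (ψ a b)) (μ a)) =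
      ⨅ b, Xc.hom (lam b) (Xinf fun a => l (μ a) (ψ a b)) := by
  simp_rw [hZsup, hXinf, (adj.2.2.2 _ _ _).1]
  exact iInf_comm
end
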